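/- arXiv:2407.11086 — 3 statements merged into one kernel-verified Lean document; each statement's English description precedes it below -/
import Mathlib

section
/- (Equivalence between score matching and conditional score matching, Vincent 2011.) Let n, m be positive integers and let p : ℝⁿ × ℝᵐ → ℝ be a measurable joint probability density with everywhere-positive marginals q(x̃) = ∫ p(x̃, x) dx and p_X(x) = ∫ p(x̃, x) dx̃. Assume that for every x the map x̃ ↦ p(x̃, x) is differentiable, that q is differentiable with ∇q(x̃) = ∫ ∇_{x̃} p(x̃, x) dx for every x̃, and that ∫ ‖∇_{x̃} log q(x̃)‖² q(x̃) dx̃ and ∫∫ ‖∇_{x̃} log p(x̃|x)‖² p(x̃, x) dx dx̃ are finite. Then for every measurable f : ℝⁿ → ℝⁿ with ∫ ‖f(x̃)‖² q(x̃) dx̃ < ∞, the two objectives J₁(f) = ∫ ‖f(x̃) − ∇_{x̃} log q(x̃)‖² q(x̃) dx̃ and J₂(f) = ∫∫ ‖f(x̃) − ∇_{x̃} log p(x̃|x)‖² p(x̃, x) dx dx̃ differ by a constant independent of f; explicitly, J₁(f) − J₂(f) = ∫ ‖∇_{x̃} log q(x̃)‖² q(x̃) dx̃ − ∫∫ ‖∇_{x̃}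 log p(x̃|x)‖² p(x̃, x) dx dx̃. -/
/-!
Write `s(x̃, x) = ∇_{x̃} log p(x̃|x)` for the conditional score and `g = ∇ log q` for the
marginal one. The identities `p • s = ∇_{x̃} p` and `q • g = ∇q`, together with the
interchange `∇q = ∫ ∇_{x̃} p dx`, give `q(x̃) g(x̃) = ∫ p(x̃, x) s(x̃, x) dx`. After expanding
both squares, `∫ ‖f‖² q = ∫∫ ‖f‖² p` by Fubini, and the cross terms `∫ ⟪f, q g⟫` and
`∫∫ ⟪f, p s⟫` agree by the identity above, so only the `f`-free terms survive.
-/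

open MeasureTheory RealInnerProductSpace

section Gradient

variable {E : Type*} [NormedAddCommGroup E] [InnerProductSpace ℝ E] [CompleteSpace E]
  {f : E → ℝ} {x : E}

theorem smul_gradient_log (hf : DifferentiableAt ℝ f x) (hfx : f x ≠ 0) :
    f x • gradient (fun y => Real.log (f y)) x = gradient f x := by
  have h : HasFDerivAt (fun y => Real.log (f y)) ((f x)⁻¹ • fderiv ℝ f x) x :=
    (Real.hasDerivAt_log hfx).comp_hasFDerivAt x hf.hasFDerivAt
  simp only [gradient, h.fderiv, map_smul, smul_smul, mul_inv_cancel₀ hfx, one_smul]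

theorem gradient_div_const (hf : DifferentiableAt ℝ f x) (c : ℝ) :
    gradient (fun y => f y / c) x = c⁻¹ • gradient f x := by
  have h : HasFDerivAt (fun y => f y / c) (c⁻¹ • fderiv ℝ f x) x := by
    simpa only [div_eq_mul_inv, mul_comm _ c⁻¹] using hf.hasFDerivAt.const_mul c⁻¹
  simp only [gradient, h.fderiv, map_smul]

theorem IsLocalMin.gradient_eq_zero (h : IsLocalMin f x) : gradient f x = 0 := by
  simp only [gradient, h.fderiv_eq_zero, map_zero]

/-- At a zero of `f` both sides vanish, the right one because `x` is then a minimum of `f`. -/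
theorem smul_gradient_log_div_const (hf_nonneg : ∀ y, 0 ≤ f y) (hf : DifferentiableAt ℝ f x)
    {c : ℝ} (hc : c ≠ 0) :
    f x • gradient (fun y => Real.log (f y / c)) x = gradient f x := by
  rcases (hf_nonneg x).eq_or_lt with hzero | hpos
  · have hmin : IsLocalMin f x := .of_forall fun y => hzero ▸ hf_nonneg y
    rw [← hzero, zero_smul, hmin.gradient_eq_zero]
  · have hfc : DifferentiableAt ℝ (fun y => f y / c) x := by
      simpa only [div_eq_mul_inv] using hf.mul_const c⁻¹
    have h := smul_gradient_log hfc (div_ne_zero hpos.ne' hc)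
    rw [gradient_div_const hf] at h
    calc f x • gradient (fun y => Real.log (f y / c)) x
        = c • (f x / c) • gradient (fun y => Real.log (f y / c)) x := by
          rw [smul_smul, mul_div_cancel₀ _ hc]
      _ = gradient f x := by rw [h, smul_inv_smul₀ hc]

theorem measurable_gradient [MeasurableSpace E] [BorelSpace E] [SecondCountableTopology E]
    (f : E → ℝ) : Measurable (gradient f) :=
  (InnerProductSpace.toDual ℝ E).symm.continuous.measurable.comp (measurable_fderiv ℝ f)

end Gradient

section ParametricDerivative

variable {α : Type*} [MeasurableSpace α]

/-- The directional derivative is the pointwise limit of the difference quotients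
`k • (p (y + k⁻¹ • v) a - p y a)`, each of which is jointly measurable. -/
theorem measurable_fderiv_apply_of_differentiable_left {E F : Type*} [NormedAddCommGroup E]
    [NormedSpace ℝ E] [MeasurableSpace E] [BorelSpace E] [SecondCountableTopology E]
    [NormedAddCommGroup F] [NormedSpace ℝ F] [MeasurableSpace F] [BorelSpace F]
    [SecondCountableTopology F]
    {p : E → α → F} (hp : Measurable (Function.uncurry p))
    (hp_diff : ∀ a, Differentiable ℝ (fun y => p y a)) (v : E) :
    Measurable (fun z : E × α => fderiv ℝ (fun y => p y z.2) z.1 v) := by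
  refine measurable_of_tendsto_metrizable (f := fun (k : ℕ) (z : E × α) =>
    (k : ℝ) • (p (z.1 + (k : ℝ)⁻¹ • v) z.2 - p z.1 z.2)) (fun k => ?_)
    (tendsto_pi_nhds.2 fun z => ?_)
  · exact ((hp.comp ((measurable_fst.add_const _).prodMk measurable_snd)).sub hp).const_smul _
  · exact (hp_diff z.2 z.1).hasFDerivAt.lim v
      (tendsto_norm_atTop_atTop.comp tendsto_natCast_atTop_atTop)

theorem measurable_gradient_of_differentiable_left {E : Type*} [NormedAddCommGroup E]
    [InnerProductSpace ℝ E] [FiniteDimensional ℝ E] [MeasurableSpace E] [BorelSpace E]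
    {p : E → α → ℝ} (hp : Measurable (Function.uncurry p))
    (hp_diff : ∀ a, Differentiable ℝ (fun y => p y a)) :
    Measurable (fun z : E × α => gradient (fun y => p y z.2) z.1) := by
  let b := stdOrthonormalBasis ℝ E
  have hrepr : (fun z : E × α => gradient (fun y => p y z.2) z.1) =
      fun z => ∑ i, fderiv ℝ (fun y => p y z.2) z.1 (b i) • b i := by
    funext z
    refine (b.sum_repr' _).symm.trans (Finset.sum_congr rfl fun i _ => ?_)
    rw [real_inner_comm, inner_gradient_left]
  rw [hrepr]
  exact Finset.measurable_sum _ fun i _ =>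
    (measurable_fderiv_apply_of_differentiable_left hp hp_diff (b i)).smul_const (b i)

end ParametricDerivative

section WeightedSquares

variable {α β H : Type*} [MeasurableSpace α] [MeasurableSpace β] {μ : Measure α}
  {ν : Measure β} [NormedAddCommGroup H] [InnerProductSpace ℝ H] {w : α → ℝ} {u v : α → H}

theorem abs_inner_smul_le {w : ℝ} (hw : 0 ≤ w) (u v : H) :
    |⟪u, w • v⟫| ≤ (‖u‖ ^ 2 * w + ‖v‖ ^ 2 * w) / 2 := by
  rw [real_inner_smul_right, abs_mul, abs_of_nonneg hw]
  nlinarith [abs_real_inner_le_norm u v, two_mul_le_add_sq ‖u‖ ‖v‖]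

theorem norm_smul_le_of_nonneg {w : ℝ} (hw : 0 ≤ w) (v : H) :
    ‖w • v‖ ≤ (w + ‖v‖ ^ 2 * w) / 2 := by
  rw [norm_smul, Real.norm_eq_abs, abs_of_nonneg hw]
  nlinarith [two_mul_le_add_sq 1 ‖v‖]

theorem Integrable.inner_smul_of_sq (hw : ∀ x, 0 ≤ w x) (hu : AEStronglyMeasurable u μ)
    (hwv : AEStronglyMeasurable (fun x => w x • v x) μ)
    (hu2 : Integrable (fun x => ‖u x‖ ^ 2 * w x) μ)
    (hv2 : Integrable (fun x => ‖v x‖ ^ 2 * w x) μ) :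
    Integrable (fun x => ⟪u x, w x • v x⟫) μ :=
  ((hu2.add hv2).div_const 2).mono' (hu.inner hwv)
    (.of_forall fun x => (Real.norm_eq_abs _).trans_le (abs_inner_smul_le (hw x) _ _))

theorem Integrable.smul_of_sq (hw : ∀ x, 0 ≤ w x) (hw_int : Integrable w μ)
    (hwv : AEStronglyMeasurable (fun x => w x • v x) μ)
    (hv2 : Integrable (fun x => ‖v x‖ ^ 2 * w x) μ) :
    Integrable (fun x => w x • v x) μ :=
  ((hw_int.add hv2).div_const 2).mono' hwv
    (.of_forall fun x => norm_smul_le_of_nonneg (hw x) _)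

theorem integral_norm_sub_sq_mul (hw : ∀ x, 0 ≤ w x) (hu : AEStronglyMeasurable u μ)
    (hwv : AEStronglyMeasurable (fun x => w x • v x) μ)
    (hu2 : Integrable (fun x => ‖u x‖ ^ 2 * w x) μ)
    (hv2 : Integrable (fun x => ‖v x‖ ^ 2 * w x) μ) :
    ∫ x, ‖u x - v x‖ ^ 2 * w x ∂μ =
      ∫ x, ‖u x‖ ^ 2 * w x ∂μ - 2 * ∫ x, ⟪u x, w x • v x⟫ ∂μ + ∫ x, ‖v x‖ ^ 2 * w x ∂μ := by
  have hcross := (Integrable.inner_smul_of_sq hw hu hwv hu2 hv2).const_mul 2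
  have hexpand : ∀ x, ‖u x - v x‖ ^ 2 * w x =
      ‖u x‖ ^ 2 * w x - 2 * ⟪u x, w x • v x⟫ + ‖v x‖ ^ 2 * w x := fun x => by
    rw [norm_sub_sq_real, real_inner_smul_right]; ring
  simp_rw [hexpand]
  rw [integral_add (f := fun x => ‖u x‖ ^ 2 * w x - 2 * ⟪u x, w x • v x⟫)
      (hu2.sub hcross) hv2,
    integral_sub hu2 hcross, integral_const_mul]

variable [SFinite ν] {p : α → β → ℝ}

theorem integrable_prod_mul_left (hp : AEStronglyMeasurable (Function.uncurry p) (μ.prod ν))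
    (hp_nonneg : ∀ x y, 0 ≤ p x y) (hp_int : ∀ x, Integrable (p x) ν) {φ : α → ℝ}
    (hφ : AEStronglyMeasurable φ μ) (hφp : Integrable (fun x => φ x * ∫ y, p x y ∂ν) μ) :
    Integrable (fun z : α × β => φ z.1 * p z.1 z.2) (μ.prod ν) := by
  refine (integrable_prod_iff (hφ.comp_fst.mul hp)).2
    ⟨.of_forall fun x => (hp_int x).const_mul (φ x), hφp.norm.congr (.of_forall fun x => ?_)⟩
  simp only [Pi.mul_apply, Function.uncurry_apply_pair, norm_mul, Real.norm_eq_abs,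
    abs_of_nonneg (hp_nonneg x _), abs_of_nonneg (integral_nonneg (f := p x) (hp_nonneg x)),
    integral_const_mul]

theorem integral_prod_mul_left [SFinite μ]
    (hp : AEStronglyMeasurable (Function.uncurry p) (μ.prod ν))
    (hp_nonneg : ∀ x y, 0 ≤ p x y) (hp_int : ∀ x, Integrable (p x) ν) {φ : α → ℝ}
    (hφ : AEStronglyMeasurable φ μ) (hφp : Integrable (fun x => φ x * ∫ y, p x y ∂ν) μ) :
    ∫ z, φ z.1 * p z.1 z.2 ∂(μ.prod ν) = ∫ x, φ x * ∫ y, p x y ∂ν ∂μ := by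
  rw [integral_prod _ (integrable_prod_mul_left hp hp_nonneg hp_int hφ hφp)]
  simp only [integral_const_mul]

theorem integral_prod_inner_left [SFinite μ] [CompleteSpace H] {Φ : α × β → H} {u : α → H}
    (h : Integrable (fun z => ⟪u z.1, Φ z⟫) (μ.prod ν))
    (hΦ : ∀ᵐ x ∂μ, Integrable (fun y => Φ (x, y)) ν) :
    ∫ z, ⟪u z.1, Φ z⟫ ∂(μ.prod ν) = ∫ x, ⟪u x, ∫ y, Φ (x, y) ∂ν⟫ ∂μ := by
  rw [integral_prod _ h]
  refine integral_congr_ae ?_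
  filter_upwards [hΦ] with x hx
  exact integral_inner hx (u x)

/-- `hmarg` says that `g x` is the mean of `S (x, ·)` under the conditional density
`p x · / q x`. -/
theorem integral_sq_error_sub_integral_prod_sq_error [SFinite μ] [CompleteSpace H]
    {q : α → ℝ} {g : α → H} {S : α × β → H}
    (hp : AEStronglyMeasurable (Function.uncurry p) (μ.prod ν))
    (hp_nonneg : ∀ x y, 0 ≤ p x y) (hp_int : ∀ x, Integrable (p x) ν)
    (hq : ∀ x, q x = ∫ y, p x y ∂ν) (hmarg : ∀ x, ∫ y, p x y • S (x, y) ∂ν = q x • g x)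
    (hu : AEStronglyMeasurable u μ) (hqg : AEStronglyMeasurable (fun x => q x • g x) μ)
    (hpS : AEStronglyMeasurable (fun z : α × β => p z.1 z.2 • S z) (μ.prod ν))
    (hu2 : Integrable (fun x => ‖u x‖ ^ 2 * q x) μ)
    (hg2 : Integrable (fun x => ‖g x‖ ^ 2 * q x) μ)
    (hS2 : Integrable (fun z : α × β => ‖S z‖ ^ 2 * p z.1 z.2) (μ.prod ν)) :
    (∫ x, ‖u x - g x‖ ^ 2 * q x ∂μ) - ∫ z, ‖u z.1 - S z‖ ^ 2 * p z.1 z.2 ∂(μ.prod ν) =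
      (∫ x, ‖g x‖ ^ 2 * q x ∂μ) - ∫ z, ‖S z‖ ^ 2 * p z.1 z.2 ∂(μ.prod ν) := by
  obtain rfl : q = fun x => ∫ y, p x y ∂ν := funext hq
  beta_reduce at hmarg hqg hu2 hg2 ⊢
  have hu_sq : AEStronglyMeasurable (fun x => ‖u x‖ ^ 2) μ := hu.norm.pow 2
  have hu2' := integrable_prod_mul_left hp hp_nonneg hp_int hu_sq hu2
  have hcross :=
    Integrable.inner_smul_of_sq (fun z => hp_nonneg z.1 z.2) hu.comp_fst hpS hu2' hS2
  have hslice : ∀ᵐ x ∂μ, Integrable (fun y => p x y • S (x, y)) ν := by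
    filter_upwards [hS2.prod_right_ae, hpS.prodMk_left] with x hS2x hpSx
    exact Integrable.smul_of_sq (hp_nonneg x) (hp_int x) hpSx hS2x
  rw [integral_norm_sub_sq_mul (fun x => integral_nonneg (f := p x) (hp_nonneg x))
      hu hqg hu2 hg2,
    integral_norm_sub_sq_mul (fun z => hp_nonneg z.1 z.2) hu.comp_fst hpS hu2' hS2,
    integral_prod_mul_left hp hp_nonneg hp_int hu_sq hu2,
    integral_prod_inner_left hcross hslice]
  simp only [hmarg]
  ring

end WeightedSquares

theorem score_matching_eq_conditional_score_matching_general
    (n m : ℕ)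
    (p : EuclideanSpace ℝ (Fin n) → EuclideanSpace ℝ (Fin m) → ℝ)
    (hp_meas : Measurable (Function.uncurry p))
    (hp_nonneg : ∀ xt x, 0 ≤ p xt x)
    (q : EuclideanSpace ℝ (Fin n) → ℝ)
    (hq_def : ∀ xt, q xt = ∫ x, p xt x)
    (pX : EuclideanSpace ℝ (Fin m) → ℝ)
    (hq_pos : ∀ xt, 0 < q xt) (hpX_pos : ∀ x, 0 < pX x)
    (hp_diff : ∀ x, Differentiable ℝ (fun xt => p xt x))
    (hq_diff : Differentiable ℝ q)
    (hq_grad : ∀ xt, gradient q xt = ∫ x, gradient (fun y => p y x) xt)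
    (hfin1 : Integrable (fun xt =>
      ‖gradient (fun y => Real.log (q y)) xt‖ ^ 2 * q xt))
    (hfin2 : Integrable (fun z : EuclideanSpace ℝ (Fin n) × EuclideanSpace ℝ (Fin m) =>
      ‖gradient (fun y => Real.log (p y z.2 / pX z.2)) z.1‖ ^ 2 * p z.1 z.2)) :
    ∀ f : EuclideanSpace ℝ (Fin n) → EuclideanSpace ℝ (Fin n), Measurable f →
      Integrable (fun xt => ‖f xt‖ ^ 2 * q xt) →
      (∫ xt, ‖f xt - gradient (fun y => Real.log (q y)) xt‖ ^ 2 * q xt) -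
        (∫ z : EuclideanSpace ℝ (Fin n) × EuclideanSpace ℝ (Fin m),
          ‖f z.1 - gradient (fun y => Real.log (p y z.2 / pX z.2)) z.1‖ ^ 2 * p z.1 z.2) =
      (∫ xt, ‖gradient (fun y => Real.log (q y)) xt‖ ^ 2 * q xt) -
        (∫ z : EuclideanSpace ℝ (Fin n) × EuclideanSpace ℝ (Fin m),
          ‖gradient (fun y => Real.log (p y z.2 / pX z.2)) z.1‖ ^ 2 * p z.1 z.2) := by
  intro f hf hf2
  -- a non-integrable slice would have Bochner integral `0`, contradicting `0 < q xt`
  have hp_int : ∀ xt, Integrable (p xt) := fun xt => by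
    by_contra h
    exact (hq_pos xt).ne' (by rw [hq_def, integral_undef h])
  have hqg : (fun xt => q xt • gradient (fun y => Real.log (q y)) xt) = gradient q :=
    funext fun xt => smul_gradient_log (hq_diff xt) (hq_pos xt).ne'
  have hps : ∀ xt x, p xt x • gradient (fun y => Real.log (p y x / pX x)) xt =
      gradient (fun y => p y x) xt := fun xt x =>
    smul_gradient_log_div_const (hp_nonneg · x) (hp_diff x xt) (hpX_pos x).ne'
  rw [Measure.volume_eq_prod] at hfin2 ⊢
  refine integral_sq_error_sub_integral_prod_sq_error hp_meas.aestronglyMeasurable hp_nonneg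
    hp_int hq_def (fun xt => ?_) hf.aestronglyMeasurable ?_ ?_ hf2 hfin1 hfin2
  · rw [congrFun hqg xt, hq_grad]
    exact integral_congr_ae (.of_forall (hps xt))
  · rw [hqg]
    exact (measurable_gradient q).aestronglyMeasurable
  · simp only [hps]
    exact (measurable_gradient_of_differentiable_left hp_meas hp_diff).aestronglyMeasurable

/-- **Equivalence between score matching and conditional score matching (Vincent 2011).**
For a measurable joint probability density `p` on `ℝⁿ × ℝᵐ` with everywhere-positive
marginals `q(x̃) = ∫ p(x̃, x) dx` and `p_X(x) = ∫ p(x̃, x) dx̃` (here `x̃` is written `xt`),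
under differentiability and gradient/integral interchange assumptions and finiteness of
`∫ ‖∇ log q‖² q` and `∫∫ ‖∇_{x̃} log p(x̃|x)‖² p(x̃,x)`, for every measurable
`f : ℝⁿ → ℝⁿ` with `∫ ‖f‖² q < ∞` the objectives
`J₁(f) = ∫ ‖f − ∇ log q‖² q` and `J₂(f) = ∫∫ ‖f − ∇_{x̃} log p(x̃|x)‖² p(x̃,x)`
satisfy `J₁(f) − J₂(f) = ∫ ‖∇ log q‖² q − ∫∫ ‖∇_{x̃} log p(x̃|x)‖² p(x̃,x)`,
a constant independent of `f`. -/
theorem score_matching_eq_conditional_score_matching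
    (n m : ℕ) (hn : 0 < n) (hm : 0 < m)
    (p : EuclideanSpace ℝ (Fin n) → EuclideanSpace ℝ (Fin m) → ℝ)
    (hp_meas : Measurable (Function.uncurry p))
    (hp_nonneg : ∀ xt x, 0 ≤ p xt x)
    (hp_prob : ∫ z : EuclideanSpace ℝ (Fin n) × EuclideanSpace ℝ (Fin m), p z.1 z.2 = 1)
    (q : EuclideanSpace ℝ (Fin n) → ℝ)
    (hq_def : ∀ xt, q xt = ∫ x, p xt x)
    (pX : EuclideanSpace ℝ (Fin m) → ℝ)
    (hpX_def : ∀ x, pX x = ∫ xt, p xt x)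
    (hq_pos : ∀ xt, 0 < q xt) (hpX_pos : ∀ x, 0 < pX x)
    (hp_diff : ∀ x, Differentiable ℝ (fun xt => p xt x))
    (hq_diff : Differentiable ℝ q)
    (hq_grad : ∀ xt, gradient q xt = ∫ x, gradient (fun y => p y x) xt)
    (hfin1 : Integrable (fun xt =>
      ‖gradient (fun y => Real.log (q y)) xt‖ ^ 2 * q xt))
    (hfin2 : Integrable (fun z : EuclideanSpace ℝ (Fin n) × EuclideanSpace ℝ (Fin m) =>
      ‖gradient (fun y => Real.log (p y z.2 / pX z.2)) z.1‖ ^ 2 * p z.1 z.2)) :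
    ∀ f : EuclideanSpace ℝ (Fin n) → EuclideanSpace ℝ (Fin n), Measurable f →
      Integrable (fun xt => ‖f xt‖ ^ 2 * q xt) →
      (∫ xt, ‖f xt - gradient (fun y => Real.log (q y)) xt‖ ^ 2 * q xt) -
        (∫ z : EuclideanSpace ℝ (Fin n) × EuclideanSpace ℝ (Fin m),
          ‖f z.1 - gradient (fun y => Real.log (p y z.2 / pX z.2)) z.1‖ ^ 2 * p z.1 z.2) =
      (∫ xt, ‖gradient (fun y => Real.log (q y)) xt‖ ^ 2 * q xt) -
        (∫ z : EuclideanSpace ℝ (Fin n) × EuclideanSpace ℝ (Fin m),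
          ‖gradient (fun y => Real.log (p y z.2 / pX z.2)) z.1‖ ^ 2 * p z.1 z.2) :=
  score_matching_eq_conditional_score_matching_general n m p hp_meas hp_nonneg q hq_def pX hq_pos
    hpX_pos hp_diff hq_diff hq_grad hfin1 hfin2
end

section
/- (Theorem 2: Learning forces via coordinate denoising.) Let n be a positive integer, τ > 0 and c > 0. Let p_eq be a probability density on ℝⁿ and φ_τ(u) = (2πτ²)^{−n/2} exp(−‖u‖²/(2τ²)). Define the joint density π(x_eq, x_f) = p_eq(x_eq) · φ_τ(x_f − x_eq) and the marginal q(x_f) = ∫ π(x_eq, x_f) dx_eq. Assume q is everywhere positive and of Boltzmann form q(x_f) = exp(−E(x_f)/c)/Z for a differentiable E : ℝⁿ → ℝ and normalizing constant Z ∈ (0, ∞), that ∇q(x_f) = ∫ ∇_{x_f} π(x_eq, x_f) dx_eq for every x_f, and that ∫∫ ‖(x_f − x_eq)/τ²‖² dπ and ∫ ‖∇ log q‖² q are finite. Then for every measurable f : ℝⁿ → ℝⁿ with ∫ ‖f(x_f)‖² q(x_f) dx_f < ∞: ∫ ‖f(x_f) − (x_f − x_eq)‖² dπ(x_eq, x_f)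 = (τ⁴/c²) ∫ ‖(−c/τ²) f(x_f) − (−∇E(x_f))‖² q(x_f) dx_f + C, where C = τ⁴ ( ∫ ‖(x_f − x_eq)/τ²‖² dπ − ∫ ‖∇_{x_f} log q(x_f)‖² q(x_f) dx_f ) does not depend on f. -/
/-!
Expanding the square, the denoising loss is
`∫ ‖f‖² q - 2 ∫ ⟪f(x_f), x_f - x_eq⟫ π + ∫ ‖x_f - x_eq‖² π`.
Differentiating the Gaussian kernel under the integral gives Tweedie's identity
`∫ π(x_eq, x_f) (x_f - x_eq) dx_eq = -τ² ∇q(x_f) = -τ² q(x_f) ∇log q(x_f)`,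
so the cross term is `2τ² ∫ ⟪f, ∇log q⟫ q`, and completing the square gives
`∫ ‖f + τ² ∇log q‖² q` plus a term independent of `f`.
For a Boltzmann marginal `∇log q = -∇E / c`, so `f + τ² ∇log q = -(τ²/c) ((-c/τ²) f + ∇E)`.
-/

open MeasureTheory Function InnerProductSpace RealInnerProductSpace

section Gradient

variable {F : Type*} [NormedAddCommGroup F] [InnerProductSpace ℝ F] [CompleteSpace F]
  {f : F → ℝ} {v x : F}

theorem HasDerivAt.comp_hasGradientAt {h : ℝ → ℝ} {h' : ℝ} (hh : HasDerivAt h h' (f x))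
    (hf : HasGradientAt f v x) : HasGradientAt (fun y => h (f y)) (h' • v) x := by
  rw [hasGradientAt_iff_hasFDerivAt, map_smul]
  exact hh.comp_hasFDerivAt x hf.hasFDerivAt

theorem DifferentiableAt.gradient_log (hf : DifferentiableAt ℝ f x) (hx : f x ≠ 0) :
    gradient (fun y => Real.log (f y)) x = (f x)⁻¹ • gradient f x :=
  ((Real.hasDerivAt_log hx).comp_hasGradientAt hf.hasGradientAt).gradient

theorem HasGradientAt.const_mul (hf : HasGradientAt f v x) (a : ℝ) :
    HasGradientAt (fun y => a * f y) (a • v) x := by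
  simpa using ((hasDerivAt_id (f x)).const_mul a).comp_hasGradientAt hf

theorem hasGradientAt_norm_sub_sq (w x : F) :
    HasGradientAt (fun y => ‖y - w‖ ^ 2) ((2 : ℝ) • (x - w)) x := by
  rw [hasGradientAt_iff_hasFDerivAt]
  refine ((hasFDerivAt_id x).sub_const w).norm_sq.congr_fderiv ?_
  ext y
  simp

theorem hasGradientAt_exp_neg_norm_sub_sq_div (w x : F) (σ : ℝ) :
    HasGradientAt (fun y => Real.exp (-‖y - w‖ ^ 2 / (2 * σ)))
      (-(σ⁻¹ * Real.exp (-‖x - w‖ ^ 2 / (2 * σ))) • (x - w)) x := by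
  have := HasDerivAt.comp_hasGradientAt (h := fun t => Real.exp (-t / (2 * σ)))
    ((hasDerivAt_id _).neg.div_const (2 * σ)).exp (hasGradientAt_norm_sub_sq w x)
  convert this using 1
  rw [smul_smul]
  congr 1
  ring

theorem HasGradientAt.exp_neg_div_div (hf : HasGradientAt f v x) (c Z : ℝ) :
    HasGradientAt (fun y => Real.exp (-f y / c) / Z)
      ((Real.exp (-f x / c) / Z) • (-c⁻¹ • v)) x := by
  have := HasDerivAt.comp_hasGradientAt (h := fun t => Real.exp (-t / c) / Z)
    (((hasDerivAt_id _).neg.div_const c).exp.div_const Z) hf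
  convert this using 1
  rw [smul_smul]
  congr 1
  ring

variable [MeasurableSpace F] [BorelSpace F]

theorem measurable_gradient_s6 (f : F → ℝ) : Measurable (gradient f) :=
  (toDual ℝ F).symm.continuous.measurable.comp (measurable_fderiv ℝ f)

end Gradient

section Integrability

variable {γ E : Type*} [MeasurableSpace γ] {m : Measure γ}
  [NormedAddCommGroup E] [InnerProductSpace ℝ E] {w : γ → ℝ}

theorem integrable_inner_mul_of_integrable_norm_sq_mul {u v : γ → E} (hw : ∀ z, 0 ≤ w z)
    (hu : Integrable (fun z => ‖u z‖ ^ 2 * w z) m) (hv : Integrable (fun z => ‖v z‖ ^ 2 * w z) m)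
    (hm : AEStronglyMeasurable (fun z => ⟪u z, v z⟫ * w z) m) :
    Integrable (fun z => ⟪u z, v z⟫ * w z) m := by
  refine (hu.add hv).mono' hm (.of_forall fun z => ?_)
  have hcs : |⟪u z, v z⟫| ≤ ‖u z‖ * ‖v z‖ := abs_real_inner_le_norm _ _
  rw [norm_mul, Real.norm_eq_abs, Real.norm_of_nonneg (hw z), Pi.add_apply, ← add_mul]
  refine mul_le_mul_of_nonneg_right ?_ (hw z)
  nlinarith [sq_nonneg (‖u z‖ - ‖v z‖), norm_nonneg (u z), norm_nonneg (v z)]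

theorem integrable_smul_of_integrable_norm_sq_mul {v : γ → E} (hw : ∀ z, 0 ≤ w z)
    (hw_int : Integrable w m) (hv : Integrable (fun z => ‖v z‖ ^ 2 * w z) m)
    (hm : AEStronglyMeasurable (fun z => w z • v z) m) :
    Integrable (fun z => w z • v z) m := by
  refine (hw_int.add hv).mono' hm (.of_forall fun z => ?_)
  rw [norm_smul, Real.norm_of_nonneg (hw z), Pi.add_apply]
  nlinarith [sq_nonneg (‖v z‖ - 1), hw z, mul_nonneg (hw z) (sq_nonneg (‖v z‖ - 1))]

end Integrability

section Marginal

variable {α β : Type*} [MeasurableSpace α] [MeasurableSpace β] {μ : Measure α} {ν : Measure β}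
  [SFinite μ] [SFinite ν] {p : α → β → ℝ} {q g : β → ℝ}

theorem integrable_prod_of_integrable_mul_marginal (hp0 : ∀ x y, 0 ≤ p x y)
    (hp : Measurable (uncurry p)) (hp_int : ∀ y, Integrable (p · y) μ)
    (hq : ∀ y, q y = ∫ x, p x y ∂μ) (hg : Measurable g) (hgq : Integrable (fun y => g y * q y) ν) :
    Integrable (fun z : α × β => g z.2 * p z.1 z.2) (μ.prod ν) := by
  refine (integrable_prod_iff' ((hg.comp measurable_snd).mul hp).aestronglyMeasurable).2
    ⟨.of_forall fun y => (hp_int y).const_mul (g y), hgq.norm.congr (.of_forall fun y => ?_)⟩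
  simp only [Pi.mul_apply, comp_apply, uncurry_apply_pair, norm_mul, Real.norm_of_nonneg (hp0 _ _),
    integral_const_mul, hq, Real.norm_of_nonneg (integral_nonneg (hp0 · y))]

theorem integral_prod_eq_integral_mul_marginal (hq : ∀ y, q y = ∫ x, p x y ∂μ)
    (h : Integrable (fun z : α × β => g z.2 * p z.1 z.2) (μ.prod ν)) :
    ∫ z, g z.2 * p z.1 z.2 ∂μ.prod ν = ∫ y, g y * q y ∂ν := by
  simp only [integral_prod_symm _ h, integral_const_mul, hq]

end Marginal

section DenoisingScoreMatching

variable {E : Type*} [NormedAddCommGroup E] [InnerProductSpace ℝ E] [CompleteSpace E]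
  [MeasurableSpace E] [BorelSpace E] [SecondCountableTopology E] {μ : Measure E} [SFinite μ]
  {p : E → E → ℝ}

theorem integral_inner_sub_mul_eq (hp0 : ∀ x y, 0 ≤ p x y) (hp : Measurable (uncurry p))
    (hp_int : ∀ y, Integrable (p · y) μ)
    (hε : Integrable (fun z : E × E => ‖z.2 - z.1‖ ^ 2 * p z.1 z.2) (μ.prod μ)) {f : E → E}
    (hcross : Integrable (fun z : E × E => ⟪f z.2, z.2 - z.1⟫ * p z.1 z.2) (μ.prod μ)) :
    ∫ z, ⟪f z.2, z.2 - z.1⟫ * p z.1 z.2 ∂μ.prod μ = ∫ y, ⟪f y, ∫ x, p x y • (y - x) ∂μ⟫ ∂μ := by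
  rw [integral_prod_symm _ hcross]
  refine integral_congr_ae ?_
  filter_upwards [hε.prod_left_ae] with y hy
  have hvec : Integrable (fun x => p x y • (y - x)) μ :=
    integrable_smul_of_integrable_norm_sq_mul (hp0 · y) (hp_int y) hy
      (hp.of_uncurry_right.smul (measurable_const.sub measurable_id)).aestronglyMeasurable
  simp only [← integral_inner hvec, real_inner_smul_right, mul_comm]

theorem denoising_score_matching (hp0 : ∀ x y, 0 ≤ p x y) (hp : Measurable (uncurry p))
    (hp_int : ∀ y, Integrable (p · y) μ) {q : E → ℝ} (hq : ∀ y, q y = ∫ x, p x y ∂μ)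
    {s : E → E} (hs : Measurable s) {σ : ℝ}
    (hscore : ∀ y, ∫ x, p x y • (y - x) ∂μ = -σ • (q y • s y))
    (hε : Integrable (fun z : E × E => ‖z.2 - z.1‖ ^ 2 * p z.1 z.2) (μ.prod μ))
    (hsq : Integrable (fun y => ‖s y‖ ^ 2 * q y) μ) {f : E → E} (hf : Measurable f)
    (hfq : Integrable (fun y => ‖f y‖ ^ 2 * q y) μ) :
    ∫ z, ‖f z.2 - (z.2 - z.1)‖ ^ 2 * p z.1 z.2 ∂μ.prod μ =
      ∫ y, ‖f y + σ • s y‖ ^ 2 * q y ∂μ +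
        ((∫ z, ‖z.2 - z.1‖ ^ 2 * p z.1 z.2 ∂μ.prod μ) - σ ^ 2 * ∫ y, ‖s y‖ ^ 2 * q y ∂μ) := by
  have hq0 : ∀ y, 0 ≤ q y := fun y => hq y ▸ integral_nonneg (hp0 · y)
  have hqm : Measurable q :=
    (funext hq : q = _) ▸ hp.stronglyMeasurable.integral_prod_left.measurable
  have hf_prod := integrable_prod_of_integrable_mul_marginal hp0 hp hp_int hq
    (hf.norm.pow_const 2) hfq
  have hcross_prod : Integrable (fun z : E × E => ⟪f z.2, z.2 - z.1⟫ * p z.1 z.2) (μ.prod μ) :=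
    integrable_inner_mul_of_integrable_norm_sq_mul (fun z => hp0 z.1 z.2) hf_prod hε
      (((hf.comp measurable_snd).inner (measurable_snd.sub measurable_fst)).mul
        hp).aestronglyMeasurable
  have hcross : Integrable (fun y => ⟪f y, s y⟫ * q y) μ :=
    integrable_inner_mul_of_integrable_norm_sq_mul hq0 hfq hsq
      ((hf.inner hs).mul hqm).aestronglyMeasurable
  have hL : ∫ z, ‖f z.2 - (z.2 - z.1)‖ ^ 2 * p z.1 z.2 ∂μ.prod μ =
      ∫ y, ‖f y‖ ^ 2 * q y ∂μ + ∫ z, ‖z.2 - z.1‖ ^ 2 * p z.1 z.2 ∂μ.prod μ +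
        2 * σ * ∫ y, ⟪f y, s y⟫ * q y ∂μ := by
    calc ∫ z, ‖f z.2 - (z.2 - z.1)‖ ^ 2 * p z.1 z.2 ∂μ.prod μ
        = ∫ z, (‖f z.2‖ ^ 2 * p z.1 z.2 + ‖z.2 - z.1‖ ^ 2 * p z.1 z.2) -
            2 * (⟪f z.2, z.2 - z.1⟫ * p z.1 z.2) ∂μ.prod μ := by
          congr with z
          rw [norm_sub_sq_real]
          ring
      _ = _ := by
          rw [integral_sub, integral_add hf_prod hε, integral_const_mul,
            integral_prod_eq_integral_mul_marginal (g := fun y => ‖f y‖ ^ 2) hq hf_prod,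
            integral_inner_sub_mul_eq hp0 hp hp_int hε hcross_prod]
          · simp only [hscore, real_inner_smul_right, mul_comm (q _), integral_const_mul]
            ring
          exacts [hf_prod.add hε, hcross_prod.const_mul 2]
  have hR : ∫ y, ‖f y + σ • s y‖ ^ 2 * q y ∂μ =
      ∫ y, ‖f y‖ ^ 2 * q y ∂μ + 2 * σ * ∫ y, ⟪f y, s y⟫ * q y ∂μ +
        σ ^ 2 * ∫ y, ‖s y‖ ^ 2 * q y ∂μ := by
    calc ∫ y, ‖f y + σ • s y‖ ^ 2 * q y ∂μ
        = ∫ y, (‖f y‖ ^ 2 * q y + 2 * σ * (⟪f y, s y⟫ * q y)) + σ ^ 2 * (‖s y‖ ^ 2 * q y) ∂μ := by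
          congr with y
          rw [norm_add_sq_real, norm_smul, real_inner_smul_right, mul_pow, Real.norm_eq_abs,
            sq_abs]
          ring
      _ = _ := by
          rw [integral_add, integral_add hfq (hcross.const_mul _), integral_const_mul,
            integral_const_mul]
          exacts [hfq.add (hcross.const_mul _), hsq.const_mul _]
  rw [hL, hR]
  ring

theorem gaussian_denoising_score_matching {p₀ φ : E → ℝ} (hp₀ : Measurable p₀)
    (hp₀_nonneg : ∀ x, 0 ≤ p₀ x) {σ C : ℝ} (hσ : 0 < σ) (hC : 0 ≤ C)
    (hφ : ∀ u, φ u = C * Real.exp (-‖u‖ ^ 2 / (2 * σ))) (hp : ∀ x y, p x y = p₀ x * φ (y - x))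
    {q : E → ℝ} (hq : ∀ y, q y = ∫ x, p x y ∂μ) (hq_pos : ∀ y, 0 < q y)
    (hq_diff : Differentiable ℝ q) (hq_grad : ∀ y, gradient q y = ∫ x, gradient (p x) y ∂μ)
    (hε : Integrable (fun z : E × E => ‖z.2 - z.1‖ ^ 2 * p z.1 z.2) (μ.prod μ))
    (hsq : Integrable (fun y => ‖gradient (fun y => Real.log (q y)) y‖ ^ 2 * q y) μ) {f : E → E}
    (hf : Measurable f) (hfq : Integrable (fun y => ‖f y‖ ^ 2 * q y) μ) :
    ∫ z, ‖f z.2 - (z.2 - z.1)‖ ^ 2 * p z.1 z.2 ∂μ.prod μ =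
      ∫ y, ‖f y + σ • gradient (fun y => Real.log (q y)) y‖ ^ 2 * q y ∂μ +
        ((∫ z, ‖z.2 - z.1‖ ^ 2 * p z.1 z.2 ∂μ.prod μ) -
          σ ^ 2 * ∫ y, ‖gradient (fun y => Real.log (q y)) y‖ ^ 2 * q y ∂μ) := by
  have hp_grad : ∀ x y, gradient (p x) y = (-σ)⁻¹ • (p x y • (y - x)) := by
    intro x y
    have hp_eq : p x = fun y => (p₀ x * C) * Real.exp (-‖y - x‖ ^ 2 / (2 * σ)) := by
      funext y; rw [hp, hφ]; ring
    rw [hp_eq, ((hasGradientAt_exp_neg_norm_sub_sq_div x y σ).const_mul _).gradient,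
      smul_smul, smul_smul, inv_neg]
    congr 1
    ring
  have hscore : ∀ y,
      ∫ x, p x y • (y - x) ∂μ = -σ • (q y • gradient (fun y => Real.log (q y)) y) := by
    intro y
    have := hq_grad y
    rw [funext (hp_grad · y), integral_smul] at this
    rw [(hq_diff y).gradient_log (hq_pos y).ne', smul_inv_smul₀ (hq_pos y).ne', this,
      smul_inv_smul₀ (neg_ne_zero.2 hσ.ne')]
  have hp_meas : Measurable (uncurry p) := by
    have hφ_cont : Continuous φ := funext hφ ▸ by fun_prop
    rw [show uncurry p = fun z => p₀ z.1 * φ (z.2 - z.1) from funext fun z => hp z.1 z.2]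
    exact (hp₀.comp measurable_fst).mul
      (hφ_cont.measurable.comp (measurable_snd.sub measurable_fst))
  have hp0 : ∀ x y, 0 ≤ p x y := fun x y => by
    rw [hp, hφ]
    exact mul_nonneg (hp₀_nonneg x) (mul_nonneg hC (Real.exp_nonneg _))
  -- `q y > 0` forces integrability of `p · y`, since a non-integrable function has integral `0`.
  exact denoising_score_matching hp0 hp_meas
    (fun y => .of_integral_ne_zero (hq y ▸ (hq_pos y).ne')) hq (measurable_gradient_s6 _) hscore hε
    hsq hf hfq

end DenoisingScoreMatching

theorem coordinate_denoising_learns_forces_general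
    (n : ℕ) (τ c : ℝ) (hτ : 0 < τ) (hc : 0 < c)
    (p_eq : EuclideanSpace ℝ (Fin n) → ℝ)
    (hpeq_meas : Measurable p_eq) (hpeq_nonneg : ∀ x, 0 ≤ p_eq x)
    (φτ : EuclideanSpace ℝ (Fin n) → ℝ)
    (hφτ : ∀ u, φτ u = (2 * Real.pi * τ ^ 2) ^ (-(n : ℝ) / 2) *
      Real.exp (-‖u‖ ^ 2 / (2 * τ ^ 2)))
    (pj : EuclideanSpace ℝ (Fin n) → EuclideanSpace ℝ (Fin n) → ℝ)
    (hpj : ∀ x_eq x_f, pj x_eq x_f = p_eq x_eq * φτ (x_f - x_eq))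
    (q : EuclideanSpace ℝ (Fin n) → ℝ)
    (hq_def : ∀ x_f, q x_f = ∫ x_eq, pj x_eq x_f)
    (hq_pos : ∀ x_f, 0 < q x_f)
    (En : EuclideanSpace ℝ (Fin n) → ℝ) (hEn : Differentiable ℝ En)
    (Z : ℝ)
    (hq_boltzmann : ∀ x_f, q x_f = Real.exp (-En x_f / c) / Z)
    (hq_grad : ∀ x_f, gradient q x_f = ∫ x_eq, gradient (fun y => pj x_eq y) x_f)
    (hfin1 : Integrable (fun z : EuclideanSpace ℝ (Fin n) × EuclideanSpace ℝ (Fin n) =>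
      ‖(τ ^ 2)⁻¹ • (z.2 - z.1)‖ ^ 2 * pj z.1 z.2))
    (hfin2 : Integrable (fun x_f =>
      ‖gradient (fun y => Real.log (q y)) x_f‖ ^ 2 * q x_f)) :
    ∀ f : EuclideanSpace ℝ (Fin n) → EuclideanSpace ℝ (Fin n), Measurable f →
      Integrable (fun x_f => ‖f x_f‖ ^ 2 * q x_f) →
      (∫ z : EuclideanSpace ℝ (Fin n) × EuclideanSpace ℝ (Fin n),
        ‖f z.2 - (z.2 - z.1)‖ ^ 2 * pj z.1 z.2) =
      (τ ^ 4 / c ^ 2) *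
        (∫ x_f, ‖(-(c / τ ^ 2)) • f x_f - (-(gradient En x_f))‖ ^ 2 * q x_f) +
      τ ^ 4 * ((∫ z : EuclideanSpace ℝ (Fin n) × EuclideanSpace ℝ (Fin n),
        ‖(τ ^ 2)⁻¹ • (z.2 - z.1)‖ ^ 2 * pj z.1 z.2) -
        ∫ x_f, ‖gradient (fun y => Real.log (q y)) x_f‖ ^ 2 * q x_f) := by
  intro f hf hfq
  have hq_has : ∀ x, HasGradientAt q (q x • (-c⁻¹ • gradient En x)) x := fun x => by
    simpa only [← funext hq_boltzmann, hq_boltzmann] using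
      (hEn x).hasGradientAt.exp_neg_div_div c Z
  have hs : ∀ x, gradient (fun y => Real.log (q y)) x = -c⁻¹ • gradient En x := fun x => by
    rw [(hq_has x).differentiableAt.gradient_log (hq_pos x).ne', (hq_has x).gradient,
      inv_smul_smul₀ (hq_pos x).ne']
  have hforce : ∀ x, (-(c / τ ^ 2)) • f x - -gradient En x =
      (-(c / τ ^ 2)) • (f x + τ ^ 2 • gradient (fun y => Real.log (q y)) x) := fun x => by
    rw [hs, smul_add, smul_smul, smul_smul, sub_neg_eq_add,
      show -(c / τ ^ 2) * τ ^ 2 * -c⁻¹ = 1 by field_simp, one_smul]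
  have hε : Integrable (fun z : EuclideanSpace ℝ (Fin n) × EuclideanSpace ℝ (Fin n) =>
      ‖z.2 - z.1‖ ^ 2 * pj z.1 z.2) (volume.prod volume) := by
    rw [← Measure.volume_eq_prod]
    refine (hfin1.const_mul (τ ^ 4)).congr (.of_forall fun z => ?_)
    simp only [norm_smul, mul_pow, Real.norm_eq_abs, sq_abs]
    field_simp
  rw [Measure.volume_eq_prod, gaussian_denoising_score_matching hpeq_meas hpeq_nonneg
    (by positivity) (by positivity) hφτ hpj hq_def hq_pos (fun x => (hq_has x).differentiableAt)
    hq_grad hε hfin2 hf hfq]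
  simp only [hforce, norm_smul, mul_pow, Real.norm_eq_abs, sq_abs, mul_assoc,
    integral_const_mul]
  field_simp

/-- **Theorem 2: Learning forces via coordinate denoising.**
With equilibrium density `p_eq` and coordinate Gaussian noise `φ_τ`, form the joint
density `π(x_eq, x_f) = p_eq(x_eq) φ_τ(x_f − x_eq)` and its marginal
`q(x_f) = ∫ π dx_eq`.  If `q` is everywhere positive and of Boltzmann form
`q = exp(−E/c)/Z` with `E` differentiable and `Z ∈ (0, ∞)`, the gradient/integral
interchange holds, and `∫∫ ‖(x_f−x_eq)/τ²‖² dπ` and `∫ ‖∇ log q‖² q` are finite, then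
for every measurable `f` with `∫ ‖f‖² q < ∞`,
`∫ ‖f(x_f) − (x_f − x_eq)‖² dπ
  = (τ⁴/c²) ∫ ‖(−c/τ²) f(x_f) − (−∇E(x_f))‖² q(x_f) dx_f + C` with
`C = τ⁴ (∫ ‖(x_f−x_eq)/τ²‖² dπ − ∫ ‖∇ log q‖² q)` independent of `f`. -/
theorem coordinate_denoising_learns_forces
    (n : ℕ) (hn : 0 < n) (τ c : ℝ) (hτ : 0 < τ) (hc : 0 < c)
    (p_eq : EuclideanSpace ℝ (Fin n) → ℝ)
    (hpeq_meas : Measurable p_eq) (hpeq_nonneg : ∀ x, 0 ≤ p_eq x)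
    (hpeq_prob : ∫ x : EuclideanSpace ℝ (Fin n), p_eq x = 1)
    (φτ : EuclideanSpace ℝ (Fin n) → ℝ)
    (hφτ : ∀ u, φτ u = (2 * Real.pi * τ ^ 2) ^ (-(n : ℝ) / 2) *
      Real.exp (-‖u‖ ^ 2 / (2 * τ ^ 2)))
    (pj : EuclideanSpace ℝ (Fin n) → EuclideanSpace ℝ (Fin n) → ℝ)
    (hpj : ∀ x_eq x_f, pj x_eq x_f = p_eq x_eq * φτ (x_f - x_eq))
    (q : EuclideanSpace ℝ (Fin n) → ℝ)
    (hq_def : ∀ x_f, q x_f = ∫ x_eq, pj x_eq x_f)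
    (hq_pos : ∀ x_f, 0 < q x_f)
    (En : EuclideanSpace ℝ (Fin n) → ℝ) (hEn : Differentiable ℝ En)
    (Z : ℝ) (hZ : 0 < Z)
    (hq_boltzmann : ∀ x_f, q x_f = Real.exp (-En x_f / c) / Z)
    (hq_grad : ∀ x_f, gradient q x_f = ∫ x_eq, gradient (fun y => pj x_eq y) x_f)
    (hfin1 : Integrable (fun z : EuclideanSpace ℝ (Fin n) × EuclideanSpace ℝ (Fin n) =>
      ‖(τ ^ 2)⁻¹ • (z.2 - z.1)‖ ^ 2 * pj z.1 z.2))
    (hfin2 : Integrable (fun x_f =>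
      ‖gradient (fun y => Real.log (q y)) x_f‖ ^ 2 * q x_f)) :
    ∀ f : EuclideanSpace ℝ (Fin n) → EuclideanSpace ℝ (Fin n), Measurable f →
      Integrable (fun x_f => ‖f x_f‖ ^ 2 * q x_f) →
      (∫ z : EuclideanSpace ℝ (Fin n) × EuclideanSpace ℝ (Fin n),
        ‖f z.2 - (z.2 - z.1)‖ ^ 2 * pj z.1 z.2) =
      (τ ^ 4 / c ^ 2) *
        (∫ x_f, ‖(-(c / τ ^ 2)) • f x_f - (-(gradient En x_f))‖ ^ 2 * q x_f) +
      τ ^ 4 * ((∫ z : EuclideanSpace ℝ (Fin n) × EuclideanSpace ℝ (Fin n),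
        ‖(τ ^ 2)⁻¹ • (z.2 - z.1)‖ ^ 2 * pj z.1 z.2) -
        ∫ x_f, ‖gradient (fun y => Real.log (q y)) x_f‖ ^ 2 * q x_f) :=
  coordinate_denoising_learns_forces_general n τ c hτ hc p_eq hpeq_meas hpeq_nonneg φτ hφτ pj hpj q
    hq_def hq_pos En hEn Z hq_boltzmann hq_grad hfin1 hfin2
end

section
/- (Theorem 3: Noise type transformation.) Let M ≤ K be positive integers and split ℝᴷ = ℝᴹ × ℝ^{K−M}, writing a point as x = (x⁽¹⁾, x⁽²⁾). Let f : ℝᴷ → ℝᴹ be differentiable at a point x = (x₁, x₂) with total derivative J = (J⁽¹⁾, J⁽²⁾), where J⁽¹⁾ : ℝᴹ → ℝᴹ and J⁽²⁾ : ℝ^{K−M} → ℝᴹ are its restrictions to the two factors. Let A : ℝᴹ → ℝ^{K−M} satisfy A(x₁) = x₂ and be differentiable at x₁ with derivative J_A, and suppose B := J⁽¹⁾ + J⁽²⁾ ∘ J_A is invertible. Define the constrained displacement Δx(u) = (u − x₁, A(u) − x₂) ∈ ℝᴷ, the induced noise Δd(u) = f(u, A(u)) − f(x₁, x₂) ∈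 ℝᴹ, and the linear map C = (id_{ℝᴹ}, J_A) ∘ B⁻¹ : ℝᴹ → ℝᴷ. Then Δx(u) − C(Δd(u)) = o(‖Δd(u)‖) as u → x₁; that is, the coordinate change is asymptotically linear in the noise: Δx = C·Δd + o(Δd). -/
open Asymptotics Filter Topology

/-!
Write `φ u = (u, A u)`, with derivative `D = (id, J_A)` at `x₁`, and `g = f ∘ φ`, with derivative
`J ∘ D = B` by the chain rule. Since `B` has a bounded left inverse `Binv`,
`u - x₁ = O(g u - g x₁)`. Applying `Binv` to the first-order expansion of `g` turns `u - x₁` into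
`Binv (g u - g x₁)` up to `o(u - x₁)`, and feeding this into the first-order expansion of `φ` gives
`φ u - φ x₁ = D (Binv (g u - g x₁)) + o(u - x₁)`; the error is `o(g u - g x₁)` by the first step.
-/

namespace HasFDerivAt

variable {𝕜 E F G : Type*} [NontriviallyNormedField 𝕜]
  [NormedAddCommGroup E] [NormedSpace 𝕜 E] [NormedAddCommGroup F] [NormedSpace 𝕜 F]
  [NormedAddCommGroup G] [NormedSpace 𝕜 G]
  {g : E → F} {B : E →L[𝕜] F} {L : F →L[𝕜] E} {x : E}

theorem isBigO_sub_rev_of_leftInverse (hg : HasFDerivAt g B x) (hL : Function.LeftInverse L B) :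
    (fun u => u - x) =O[𝓝 x] fun u => g u - g x := by
  have hB : (fun u => u - x) =O[𝓝 x] fun u => B (u - x) :=
    (L.isBigO_comp _ _).congr_left fun u => hL (u - x)
  exact (hB.trans (hg.isLittleO.trans_isBigO hB).right_isBigO_add).congr_right
    fun u => sub_add_cancel _ _

theorem isLittleO_sub_sub_comp_leftInverse {φ : E → G} {D : E →L[𝕜] G}
    (hφ : HasFDerivAt φ D x) (hg : HasFDerivAt g B x) (hL : Function.LeftInverse L B) :
    (fun u => φ u - φ x - D (L (g u - g x))) =o[𝓝 x] fun u => g u - g x := by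
  have hsplit : ∀ u, φ u - φ x - D (L (g u - g x)) =
      (φ u - φ x - D (u - x)) - (D.comp L) (g u - g x - B (u - x)) := by
    intro u
    rw [ContinuousLinearMap.comp_apply, map_sub L (g u - g x) (B (u - x)), hL (u - x)]
    simp only [map_sub]
    abel
  have hgL := ((D.comp L).isBigO_comp _ (𝓝 x)).trans_isLittleO hg.isLittleO
  exact ((hφ.isLittleO.sub hgL).congr_left fun u => (hsplit u).symm).trans_isBigO
    (hg.isBigO_sub_rev_of_leftInverse hL)

end HasFDerivAt

theorem noise_type_transformation_general (M K : ℕ)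
    (f : EuclideanSpace ℝ (Fin M) × EuclideanSpace ℝ (Fin (K - M)) →
      EuclideanSpace ℝ (Fin M))
    (x₁ : EuclideanSpace ℝ (Fin M)) (x₂ : EuclideanSpace ℝ (Fin (K - M)))
    (J : EuclideanSpace ℝ (Fin M) × EuclideanSpace ℝ (Fin (K - M)) →L[ℝ]
      EuclideanSpace ℝ (Fin M))
    (hf : HasFDerivAt f J (x₁, x₂))
    (A : EuclideanSpace ℝ (Fin M) → EuclideanSpace ℝ (Fin (K - M)))
    (J_A : EuclideanSpace ℝ (Fin M) →L[ℝ] EuclideanSpace ℝ (Fin (K - M)))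
    (hA : HasFDerivAt A J_A x₁) (hAx : A x₁ = x₂)
    (B : EuclideanSpace ℝ (Fin M) →L[ℝ] EuclideanSpace ℝ (Fin M))
    (hB : B = J.comp (ContinuousLinearMap.inl ℝ (EuclideanSpace ℝ (Fin M))
        (EuclideanSpace ℝ (Fin (K - M)))) +
      (J.comp (ContinuousLinearMap.inr ℝ (EuclideanSpace ℝ (Fin M))
        (EuclideanSpace ℝ (Fin (K - M))))).comp J_A)
    (Binv : EuclideanSpace ℝ (Fin M) →L[ℝ] EuclideanSpace ℝ (Fin M))
    (hBinv_left : Binv.comp B = ContinuousLinearMap.id ℝ (EuclideanSpace ℝ (Fin M)))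
    (C : EuclideanSpace ℝ (Fin M) →L[ℝ]
      EuclideanSpace ℝ (Fin M) × EuclideanSpace ℝ (Fin (K - M)))
    (hC : C = ((ContinuousLinearMap.id ℝ (EuclideanSpace ℝ (Fin M))).prod J_A).comp Binv) :
    (fun u => ((u - x₁, A u - x₂) :
        EuclideanSpace ℝ (Fin M) × EuclideanSpace ℝ (Fin (K - M))) -
      C (f (u, A u) - f (x₁, x₂)))
      =o[𝓝 x₁] (fun u => f (u, A u) - f (x₁, x₂)) := by
  subst hAx hC
  set D := (ContinuousLinearMap.id ℝ (EuclideanSpace ℝ (Fin M))).prod J_A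
  have hφ : HasFDerivAt (fun u => (u, A u)) D x₁ := (hasFDerivAt_id x₁).prodMk hA
  have hJD : J.comp D = B := by
    ext1 u
    simp [hB, D, ← map_add]
  have hg : HasFDerivAt (fun u => f (u, A u)) B x₁ := hJD ▸ hf.comp x₁ hφ
  exact hφ.isLittleO_sub_sub_comp_leftInverse hg (DFunLike.congr_fun hBinv_left)

/-- **Theorem 3: Noise type transformation.**
Split `ℝᴷ = ℝᴹ × ℝ^{K−M}`.  Let `f : ℝᴷ → ℝᴹ` be differentiable at `x = (x₁, x₂)` with
total derivative `J`, having restrictions `J⁽¹⁾ = J ∘ inl` and `J⁽²⁾ = J ∘ inr`.  Let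
`A : ℝᴹ → ℝ^{K−M}` satisfy `A(x₁) = x₂`, be differentiable at `x₁` with derivative `J_A`,
and assume `B = J⁽¹⁾ + J⁽²⁾ ∘ J_A` is invertible (with two-sided inverse `Binv`).  With
`C = (id, J_A) ∘ B⁻¹`, the constrained displacement `Δx(u) = (u − x₁, A(u) − x₂)` and the
induced noise `Δd(u) = f(u, A(u)) − f(x₁, x₂)` satisfy
`Δx(u) − C(Δd(u)) = o(‖Δd(u)‖)` as `u → x₁`. -/
theorem noise_type_transformation (M K : ℕ) (hM : 0 < M) (hK : 0 < K) (hMK : M ≤ K)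
    (f : EuclideanSpace ℝ (Fin M) × EuclideanSpace ℝ (Fin (K - M)) →
      EuclideanSpace ℝ (Fin M))
    (x₁ : EuclideanSpace ℝ (Fin M)) (x₂ : EuclideanSpace ℝ (Fin (K - M)))
    (J : EuclideanSpace ℝ (Fin M) × EuclideanSpace ℝ (Fin (K - M)) →L[ℝ]
      EuclideanSpace ℝ (Fin M))
    (hf : HasFDerivAt f J (x₁, x₂))
    (A : EuclideanSpace ℝ (Fin M) → EuclideanSpace ℝ (Fin (K - M)))
    (J_A : EuclideanSpace ℝ (Fin M) →L[ℝ] EuclideanSpace ℝ (Fin (K - M)))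
    (hA : HasFDerivAt A J_A x₁) (hAx : A x₁ = x₂)
    (B : EuclideanSpace ℝ (Fin M) →L[ℝ] EuclideanSpace ℝ (Fin M))
    (hB : B = J.comp (ContinuousLinearMap.inl ℝ (EuclideanSpace ℝ (Fin M))
        (EuclideanSpace ℝ (Fin (K - M)))) +
      (J.comp (ContinuousLinearMap.inr ℝ (EuclideanSpace ℝ (Fin M))
        (EuclideanSpace ℝ (Fin (K - M))))).comp J_A)
    (Binv : EuclideanSpace ℝ (Fin M) →L[ℝ] EuclideanSpace ℝ (Fin M))
    (hBinv_left : Binv.comp B = ContinuousLinearMap.id ℝ (EuclideanSpace ℝ (Fin M)))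
    (hBinv_right : B.comp Binv = ContinuousLinearMap.id ℝ (EuclideanSpace ℝ (Fin M)))
    (C : EuclideanSpace ℝ (Fin M) →L[ℝ]
      EuclideanSpace ℝ (Fin M) × EuclideanSpace ℝ (Fin (K - M)))
    (hC : C = ((ContinuousLinearMap.id ℝ (EuclideanSpace ℝ (Fin M))).prod J_A).comp Binv) :
    (fun u => ((u - x₁, A u - x₂) :
        EuclideanSpace ℝ (Fin M) × EuclideanSpace ℝ (Fin (K - M))) -
      C (f (u, A u) - f (x₁, x₂)))
      =o[𝓝 x₁] (fun u => f (u, A u) - f (x₁, x₂)) :=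
  noise_type_transformation_general M K f x₁ x₂ J hf A J_A hA hAx B hB Binv hBinv_left C hC
end
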